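/- The Day extension of a partial operation is residuated in each variable: for each j there is a functor R^j_θ such that for all copresheaves F₁,…,Fₙ, G there is an isomorphism Hom(θ_D(F₁,…,Fₙ), G) ≅ Hom(Fⱼ, R^j_θ(G, F₁,…,F̂ⱼ,…,Fₙ)), natural in Fⱼ and G. Equivalently, the functor Fⱼ ↦ θ_D(F₁,…,Fⱼ,…,Fₙ) has a right adjoint for every choice of the other arguments. -/

import Mathlib

open CategoryTheory Opposite

universe u v

namespace DayPaper

variable {B C : Type} [SmallCategory B] [SmallCategory C]

/-- A point of the coend defining the Day extension (left Kan extension) of a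
copresheaf `P` along `θ`, at `c`. -/
structure DayPt (θ : B ⥤ C) (P : B ⥤ Type) (c : C) : Type where
  pt : B
  elt : P.obj pt
  arr : θ.obj pt ⟶ c

/-- The relation generating the coend quotient. -/
def DayRel (θ : B ⥤ C) (P : B ⥤ Type) (c : C) : DayPt θ P c → DayPt θ P c → Prop :=
  fun x y => ∃ f : x.pt ⟶ y.pt, P.map f x.elt = y.elt ∧ x.arr = θ.map f ≫ y.arr

/-- The coend `∫^{b} P(b) × Hom(θ b, c)`. -/
def DayObj (θ : B ⥤ C) (P : B ⥤ Type) (c : C) : Type := Quot (DayRel θ P c)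

/-- The Day extension of a copresheaf `P` along `θ`, as a copresheaf on `C`. -/
def DayCopresheaf (θ : B ⥤ C) (P : B ⥤ Type) : C ⥤ Type where
  obj c := DayObj θ P c
  map {c c'} g := TypeCat.ofHom (Quot.map (fun x => (⟨x.pt, x.elt, x.arr ≫ g⟩ : DayPt θ P c'))
    (by rintro x y ⟨f, h1, h2⟩; exact ⟨f, h1, by dsimp; rw [h2, Category.assoc]⟩))
  map_id c := by
    ext q
    induction q using Quot.ind with
    | _ x => exact congrArg (Quot.mk _) (by rcases x with ⟨b, p, a⟩; simp)
  map_comp {c c' c''} g g' := by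
    ext q
    induction q using Quot.ind with
    | _ x => exact congrArg (Quot.mk _) (by rcases x with ⟨b, p, a⟩; simp)

/-- The Day extension, as a functor on copresheaf categories. -/
def DayExtGen (θ : B ⥤ C) : (B ⥤ Type) ⥤ (C ⥤ Type) where
  obj P := DayCopresheaf θ P
  map {P Q} η :=
    { app := fun c => TypeCat.ofHom (Quot.map
          (fun x => (⟨x.pt, η.app x.pt x.elt, x.arr⟩ : DayPt θ Q c))
        (by
          rintro x y ⟨f, h1, h2⟩
          exact ⟨f, by dsimp; rw [← h1, FunctorToTypes.naturality], h2⟩))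
      naturality := by
        intro c c' g
        ext q
        induction q using Quot.ind with
        | _ x => rfl }
  map_id P := by
    ext c q
    induction q using Quot.ind with
    | _ x => rfl
  map_comp {P Q R} η η' := by
    ext c q
    induction q using Quot.ind with
    | _ x => rfl

variable {ι : Type}

/-- The external product of a family of copresheaves. -/
def extProd (F : ι → (C ⥤ Type)) : (ι → C) ⥤ Type where
  obj x := ∀ i, (F i).obj (x i)
  map f := TypeCat.ofHom fun p => fun i => (F i).map (f i) (p i)
  map_id x := by ext p; simp
  map_comp f g := by ext p; simp

/-- The external product, as a functor. -/
def extProdFunctor (ι : Type) (C : Type) [SmallCategory C] :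
    (ι → (C ⥤ Type)) ⥤ ((ι → C) ⥤ Type) where
  obj := extProd
  map {F G} α :=
    { app := fun x => TypeCat.ofHom fun p => fun i => (α i).app (x i) (p i)
      naturality := by
        intro x y f
        ext p
        funext i
        first
          | exact NatTrans.naturality_apply (α i) (f i) (p i)
          | exact (NatTrans.naturality_apply (α i) (f i) (p i)).symm }
  map_id F := by ext x p; rfl
  map_comp α β := by ext x p; rfl

/-- Reindexing of pi-categories along a map of index types. -/
def reindexPi {A : Type u} [Category.{v} A] {ι' ι : Type} (h : ι' → ι) :
    (ι → A) ⥤ (ι' → A) where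
  obj x := fun i' => x (h i')
  map f := fun i' => f (h i')
  map_id _x := rfl
  map_comp _f _g := rfl

/-- The tuple `(θ₁, …, θₙ)` of a family of multi-ary operations. -/
def tupleFunctor {κ : ι → Type} (θs : ∀ i, (κ i → C) ⥤ C) :
    ((Σ i, κ i) → C) ⥤ (ι → C) where
  obj x := fun i => (θs i).obj (fun s => x ⟨i, s⟩)
  map f := fun i => (θs i).map (fun s => f ⟨i, s⟩)
  map_id x := by funext i; exact (θs i).map_id _
  map_comp f g := by funext i; exact (θs i).map_comp _ _

/-- Multi-composition of multi-ary operations on `C`. -/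
def mc {κ : ι → Type} (θ : (ι → C) ⥤ C) (θs : ∀ i, (κ i → C) ⥤ C) :
    ((Σ i, κ i) → C) ⥤ C :=
  tupleFunctor θs ⋙ θ

/-- The Day extension of a (total) `ι`-ary operation. -/
def DayExtFunctor (θ : (ι → C) ⥤ C) : (ι → (C ⥤ Type)) ⥤ (C ⥤ Type) :=
  extProdFunctor ι C ⋙ DayExtGen θ

end DayPaper

open DayPaper CategoryTheory

namespace DayPaper

variable {C : Type} [SmallCategory C] {ι : Type}

/-- The Day extension of a partial `ι`-ary operation `θ : D ⥤ C` whose domain is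
a full subcategory `i : D ↪ C^ι`: it sends a family of copresheaves `F` to the
double coend `a ↦ ∫^{d ∈ D} ∫^{c ∈ C^ι} Hom_C(θ d, a) × Hom(c, i d) × ∏ᵢ Fᵢ(cᵢ)`. -/
def pday {Dm : Type} [SmallCategory Dm] (θ : Dm ⥤ C) (i : Dm ⥤ (ι → C)) :
    (ι → (C ⥤ Type)) ⥤ (C ⥤ Type) :=
  extProdFunctor ι C ⋙ DayExtGen (𝟭 (ι → C)) ⋙
    (Functor.whiskeringLeft Dm (ι → C) Type).obj i ⋙ DayExtGen θ

/-- The tuple `(θ₁, …, θₙ)` of a family of partial operations, as a functor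
from the product of the domains to `C^ι`. -/
def tupleP {Dk : ι → Type} [∀ j, SmallCategory (Dk j)]
    (θs : ∀ j, Dk j ⥤ C) : (∀ j, Dk j) ⥤ (ι → C) where
  obj x := fun j => (θs j).obj (x j)
  map f := fun j => (θs j).map (f j)
  map_id x := by funext j; exact (θs j).map_id _
  map_comp f g := by funext j; exact (θs j).map_comp _ _

/-- The inclusion of the product of the domains of a family of partial
operations into `C^{Σ κ}`. -/
def sigmaIncl {κ : ι → Type} {Dk : ι → Type} [∀ j, SmallCategory (Dk j)]
    (is : ∀ j, Dk j ⥤ (κ j → C)) : (∀ j, Dk j) ⥤ ((Σ j, κ j) → C) where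
  obj x := fun p => (is p.1).obj (x p.1) p.2
  map f := fun p => (is p.1).map (f p.1) p.2
  map_id x := by funext p; exact congrFun ((is p.1).map_id (x p.1)) p.2
  map_comp f g := by funext p; exact congrFun ((is p.1).map_comp (f p.1) (g p.1)) p.2

end DayPaper

open DayPaper CategoryTheory

/-- The functor `[C ⥤ Type] ⥤ [C ⥤ Type]^ι` inserting its argument in the
`j`-th slot of the fixed family `F`. -/
def updFunctor {C : Type} [SmallCategory C] {ι : Type} [DecidableEq ι]
    (F : ι → (C ⥤ Type)) (j : ι) : (C ⥤ Type) ⥤ (ι → (C ⥤ Type)) :=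
  Functor.pi' fun i =>
    if i = j then 𝟭 (C ⥤ Type) else (Functor.const (C ⥤ Type)).obj (F i)

/-!
Fixing every argument but the `j`-th, the Day extension of a partial operation is the composite
of four functors: `X ↦ X(cⱼ) × ∏_{k ≠ j} Fₖ(cₖ)`, the Day extension along the identity of `C^n`,
restriction along the inclusion `i` of the domain, and the Day extension along `θ`. Each has a
right adjoint: the first is restriction along the `j`-th projection (right adjoint: right Kan
extension) followed by a product with a fixed copresheaf (right adjoint: the internal hom, as
copresheaf categories are cartesian closed); a Day extension along `θ` is left adjoint to
restriction along `θ`; and restriction is left adjoint to right Kan extension.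
-/

namespace DayPaper

open MonoidalCategory

instance isLeftAdjoint_whiskeringLeft_obj {A B : Type} [SmallCategory A] [SmallCategory B]
    (K : A ⥤ B) : ((Functor.whiskeringLeft A B Type).obj K).IsLeftAdjoint :=
  (K.ranAdjunction Type).isLeftAdjoint

section DayAdjunction

variable {B C : Type} [SmallCategory B] [SmallCategory C] (θ : B ⥤ C)

def dayUnit : 𝟭 (B ⥤ Type) ⟶ DayExtGen θ ⋙ (Functor.whiskeringLeft B C Type).obj θ where
  app P :=
    { app := fun b => TypeCat.ofHom fun p => Quot.mk _ ⟨b, p, 𝟙 _⟩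
      naturality := fun b b' e => by
        ext p
        exact Quot.sound ⟨e, rfl, by simp⟩ |>.symm }

def dayCounit : (Functor.whiskeringLeft B C Type).obj θ ⋙ DayExtGen θ ⟶ 𝟭 (C ⥤ Type) where
  app G :=
    { app := fun c => TypeCat.ofHom <| Quot.lift (fun x : DayPt θ (θ ⋙ G) c => G.map x.arr x.elt)
        (by
          rintro x y ⟨f, hf, hx⟩
          rw [hx, ← hf]
          exact Functor.map_comp_apply G _ _ _)
      naturality := fun c c' g => by
        ext q
        induction q using Quot.ind
        exact Functor.map_comp_apply G _ _ _ }
  naturality G G' η := by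
    ext c q
    induction q using Quot.ind
    exact (NatTrans.naturality_apply η _ _).symm

def dayAdjunction : DayExtGen θ ⊣ (Functor.whiskeringLeft B C Type).obj θ :=
  Adjunction.mkOfUnitCounit
    { unit := dayUnit θ
      counit := dayCounit θ
      left_triangle := by
        ext P c q
        induction q using Quot.ind
        exact congrArg (Quot.mk _) (congrArg (DayPt.mk _ _) (Category.id_comp _))
      right_triangle := by
        ext G b g
        exact Functor.map_id_apply G _ g }

instance : (DayExtGen θ).IsLeftAdjoint := (dayAdjunction θ).isLeftAdjoint

end DayAdjunction

section ExternalProduct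

variable {C : Type} [SmallCategory C] {ι : Type} [DecidableEq ι]

def extProdExcept (F : ι → (C ⥤ Type)) (j : ι) : (ι → C) ⥤ Type :=
  reindexPi (Subtype.val : {k // k ≠ j} → ι) ⋙ extProd (fun k => F k)

variable {F : ι → (C ⥤ Type)} {j : ι} {U : (C ⥤ Type) ⥤ (ι → (C ⥤ Type))}

def extProdSlotIso (slot : U ⋙ Pi.eval _ j ≅ 𝟭 _)
    (rest : ∀ k : {k // k ≠ j}, U ⋙ Pi.eval _ k.1 ≅ (Functor.const _).obj (F k)) :
    U ⋙ extProdFunctor ι C ≅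
      (Functor.whiskeringLeft _ _ Type).obj (Pi.eval (fun _ => C) j) ⋙
        tensorLeft (extProdExcept F j) :=
  NatIso.ofComponents
    (fun X => NatIso.ofComponents
      (fun c => Equiv.toIso <| (Equiv.piSplitAt j _).trans <| (Equiv.prodComm _ _).trans <|
        Equiv.prodCongr (Equiv.piCongrRight fun k => (((rest k).app X).app (c k)).toEquiv)
          ((slot.app X).app (c j)).toEquiv)
      (fun f => by
        ext p
        refine Prod.ext (funext fun k => ?_) ?_
        · exact NatTrans.naturality_apply ((rest k).app X).hom (f k) (p k)
        · exact NatTrans.naturality_apply (slot.app X).hom (f j) (p j)))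
    (fun η => by
      ext c p
      refine Prod.ext (funext fun k => ?_) ?_
      · exact congrArg (fun α => α.app (c k) (p k)) ((rest k).hom.naturality η)
      · exact congrArg (fun α => α.app (c j) (p j)) (slot.hom.naturality η))

variable (F j) in
lemma isLeftAdjoint_extProdFunctor_of_slot (slot : U ⋙ Pi.eval _ j ≅ 𝟭 _)
    (rest : ∀ k : {k // k ≠ j}, U ⋙ Pi.eval _ k.1 ≅ (Functor.const _).obj (F k)) :
    (U ⋙ extProdFunctor ι C).IsLeftAdjoint :=
  Functor.isLeftAdjoint_of_iso (extProdSlotIso slot rest).symm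

end ExternalProduct

instance isLeftAdjoint_updFunctor_comp_extProdFunctor {C : Type} [SmallCategory C] {ι : Type}
    [DecidableEq ι] (F : ι → (C ⥤ Type)) (j : ι) :
    (updFunctor F j ⋙ extProdFunctor ι C).IsLeftAdjoint :=
  isLeftAdjoint_extProdFunctor_of_slot F j (Functor.pi'CompEval _ j ≪≫ eqToIso (if_pos rfl))
    fun k => Functor.pi'CompEval _ k.1 ≪≫ eqToIso (if_neg k.2)

end DayPaper

theorem dayExtension_partial_residuated_general (C : Type) [SmallCategory C]
    (n : ℕ) (Dm : Type) [SmallCategory Dm] (i : Dm ⥤ (Fin n → C))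
    (θ : Dm ⥤ C) (F : Fin n → (C ⥤ Type)) (j : Fin n) :
    (updFunctor F j ⋙ pday θ i).IsLeftAdjoint :=
  inferInstanceAs ((updFunctor F j ⋙ extProdFunctor (Fin n) C) ⋙ DayExtGen (𝟭 _) ⋙
    (Functor.whiskeringLeft Dm (Fin n → C) Type).obj i ⋙ DayExtGen θ).IsLeftAdjoint

/-- The Day extension of a partial operation is residuated in each variable:
for every `j` and every choice of the other arguments, the functor
`Fⱼ ↦ θ_D(F₁,…,Fⱼ,…,Fₙ)` has a right adjoint. -/
theorem dayExtension_partial_residuated (C : Type) [SmallCategory C]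
    (n : ℕ) (Dm : Type) [SmallCategory Dm] (i : Dm ⥤ (Fin n → C))
    [i.Full] [i.Faithful] (θ : Dm ⥤ C) (F : Fin n → (C ⥤ Type)) (j : Fin n) :
    (updFunctor F j ⋙ pday θ i).IsLeftAdjoint :=
  dayExtension_partial_residuated_general C n Dm i θ F j
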